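/- Fix 1 < α < 2, let q₀(t) = log(e/t), ρ(s) = (1 + ((2−α)/(α−1)) ∫_s^1 dt/(t^{1/(α−1)} q₀(t)^{1/(α−1)}))^{(α−1)/(α−2)} for s ∈ (0,1], and f(z) = (z/|z|)·ρ(|z|) for z ∈ 𝔻\{0}, f(0) = 0. Then at every z ∈ 𝔻\{0}, l(f′(z)) = |f_z| − |f_z̄| = (1 + ((2−α)/(α−1)) ∫_{|z|}^1 dt/(t^{1/(α−1)} q₀(t)^{1/(α−1)}))^{1/(α−2)} · 1/(|z|^{1/(α−1)} q₀(|z|)^{1/(α−1)}). -/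

import Mathlib

/-!
Away from the origin the radial map `f(z) = (z/|z|) ρ(|z|)` has real derivative
`h ↦ a h + b h̄` with `a = (ρ(r)/r + ρ'(r))/2` and `|b| = |ρ'(r) - ρ(r)/r|/2`, where `r = |z|`;
hence `|f_z| - |f_z̄| = min (ρ(r)/r) ρ'(r)`. For the given profile `ρ = A^{(α-1)/(α-2)}` with
`A(s) = 1 + ((2-α)/(α-1)) ∫_s^1 k`, one gets `ρ' = A^{1/(α-2)} k`, so the minimum is `ρ'` as soon as
`s k(s) ≤ A(s)`. Both sides equal `1` at `s = 1`, and `s k(s) - A(s)` is increasing: since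
`1 + (2-α)/(α-1) = 1/(α-1)`, its derivative is `k(s) / ((α-1) log(e/s)) ≥ 0`.
-/

open MeasureTheory Set ENNReal

noncomputable section

/-- The kernel `t ↦ 1/(t^{1/(α-1)} (log(e/t))^{1/(α-1)})`. -/
def kern (α : ℝ) (t : ℝ) : ℝ :=
  1 / (t ^ (1 / (α - 1)) * (Real.log (Real.exp 1 / t)) ^ (1 / (α - 1)))

/-- The radial profile `ρ`. -/
def rho (α : ℝ) (s : ℝ) : ℝ :=
  (1 + ((2 - α) / (α - 1)) * ∫ t in s..1, kern α t) ^ ((α - 1) / (α - 2))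

/-- The radial mapping `f(z) = (z/|z|)·ρ(|z|)`, `f(0) = 0`. -/
def fmap (α : ℝ) (z : ℂ) : ℂ :=
  if z = 0 then 0 else (z / (‖z‖ : ℂ)) * (rho α ‖z‖ : ℂ)

/-- `f_z = (f_x - i f_y)/2`. -/
def wirtP (f : ℂ → ℂ) (z : ℂ) : ℂ :=
  (fderiv ℝ f z 1 - Complex.I * fderiv ℝ f z Complex.I) / 2

/-- `f_z̄ = (f_x + i f_y)/2`. -/
def wirtM (f : ℂ → ℂ) (z : ℂ) : ℂ :=
  (fderiv ℝ f z 1 + Complex.I * fderiv ℝ f z Complex.I) / 2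

open ComplexConjugate

theorem hasFDerivAt_norm_of_ne_zero {F : Type*} [NormedAddCommGroup F] [InnerProductSpace ℝ F]
    {x : F} (hx : x ≠ 0) : HasFDerivAt (‖·‖) (‖x‖⁻¹ • innerSL ℝ x) x := by
  have hsq := (hasStrictFDerivAt_norm_sq x).hasFDerivAt.sqrt (by positivity)
  simp only [Real.sqrt_sq (norm_nonneg _)] at hsq
  convert hsq using 1
  ext y
  simp
  ring

theorem wirtP_wirtM_of_hasFDerivAt {f : ℂ → ℂ} {z a b : ℂ} {L : ℂ →L[ℝ] ℂ}
    (hf : HasFDerivAt f L z) (hL : ∀ h, L h = a * h + b * conj h) :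
    wirtP f z = a ∧ wirtM f z = b := by
  simp only [wirtP, wirtM, hf.fderiv, hL, map_one, Complex.conj_I]
  constructor <;> ring_nf <;> simp only [Complex.I_sq] <;> ring

def radialMap (ρ : ℝ → ℝ) (z : ℂ) : ℂ :=
  if z = 0 then 0 else (z / (‖z‖ : ℂ)) * (ρ ‖z‖ : ℂ)

theorem hasFDerivAt_radialMap {ρ : ℝ → ℝ} {ρ' : ℝ} {z : ℂ} (hz : z ≠ 0)
    (hρ : HasDerivAt ρ ρ' ‖z‖) :
    ∃ L : ℂ →L[ℝ] ℂ, HasFDerivAt (radialMap ρ) L z ∧ ∀ h, L h =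
      ((ρ ‖z‖ / ‖z‖ + ρ') / 2 : ℝ) * h + (z / ‖z‖) ^ 2 * ((ρ' - ρ ‖z‖ / ‖z‖) / 2 : ℝ) * conj h := by
  have hr : 0 < ‖z‖ := norm_pos_iff.mpr hz
  have hg := (hρ.div (hasDerivAt_id _) hr.ne').comp_hasFDerivAt z (hasFDerivAt_norm_of_ne_zero hz)
  have hf := (hasFDerivAt_id z).mul (Complex.ofRealCLM.hasFDerivAt.comp z hg)
  refine ⟨_, hf.congr_of_eventuallyEq ?_, fun h => ?_⟩
  · filter_upwards [isOpen_compl_singleton.mem_nhds hz] with w hw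
    simp only [radialMap, if_neg (show w ≠ 0 from hw), Pi.mul_apply, id_eq, Function.comp_apply,
      Pi.div_apply, Complex.ofRealCLM_apply, Complex.ofReal_div]
    ring
  · have hzz : z * conj z = (‖z‖ : ℂ) ^ 2 := by
      rw [Complex.mul_conj, Complex.normSq_eq_norm_sq]; push_cast; rfl
    have hrc : (‖z‖ : ℂ) ≠ 0 := by exact_mod_cast hr.ne'
    simp only [add_apply, smul_apply, ContinuousLinearMap.comp_apply, innerSL_apply_apply,
      Complex.inner, Complex.ofRealCLM_apply, ContinuousLinearMap.id_apply, Function.comp_apply,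
      Pi.div_apply, id, smul_eq_mul]
    push_cast
    rw [Complex.re_eq_add_conj]
    simp only [map_mul, Complex.conj_conj]
    field_simp
    linear_combination ((ρ' : ℂ) * ‖z‖ - ρ ‖z‖) * h * hzz

theorem norm_wirtP_sub_norm_wirtM_radialMap {ρ : ℝ → ℝ} {ρ' : ℝ} {z : ℂ} (hz : z ≠ 0)
    (hρ : HasDerivAt ρ ρ' ‖z‖) (hsum : 0 ≤ ρ ‖z‖ / ‖z‖ + ρ') :
    ‖wirtP (radialMap ρ) z‖ - ‖wirtM (radialMap ρ) z‖ = min (ρ ‖z‖ / ‖z‖) ρ' := by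
  obtain ⟨L, hL, hLh⟩ := hasFDerivAt_radialMap hz hρ
  obtain ⟨hP, hM⟩ := wirtP_wirtM_of_hasFDerivAt hL hLh
  have hunit : ‖z / ‖z‖‖ = 1 := by simp [norm_ne_zero_iff.mpr hz]
  rw [hP, hM, norm_mul, norm_pow, hunit, Complex.norm_real, Complex.norm_real, Real.norm_eq_abs,
    Real.norm_eq_abs, abs_of_nonneg (by linarith), one_pow, one_mul]
  rcases le_total (ρ ‖z‖ / ‖z‖) ρ' with hle | hle
  · rw [min_eq_left hle, abs_of_nonneg (by linarith)]; ring
  · rw [min_eq_right hle, abs_of_nonpos (by linarith)]; ring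

theorem log_exp_one_div {t : ℝ} (ht : 0 < t) : Real.log (Real.exp 1 / t) = 1 - Real.log t := by
  rw [Real.log_div (Real.exp_ne_zero 1) ht.ne', Real.log_exp]

theorem one_sub_log_pos {t : ℝ} (ht : t ∈ Ioo 0 (Real.exp 1)) : 0 < 1 - Real.log t := by
  have := Real.log_lt_log ht.1 ht.2
  rw [Real.log_exp] at this
  linarith

theorem one_mem_Ioo_zero_exp_one : (1 : ℝ) ∈ Ioo 0 (Real.exp 1) :=
  ⟨one_pos, by simp⟩

theorem mem_Ioo_zero_exp_one {s : ℝ} (hs : 0 < s) (hs1 : s ≤ 1) : s ∈ Ioo 0 (Real.exp 1) :=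
  ⟨hs, hs1.trans_lt one_mem_Ioo_zero_exp_one.2⟩

theorem uIcc_subset_Ioo_zero_exp_one {s : ℝ} (hs : s ∈ Ioo 0 (Real.exp 1)) :
    uIcc s 1 ⊆ Ioo 0 (Real.exp 1) :=
  ordConnected_Ioo.uIcc_subset hs one_mem_Ioo_zero_exp_one

theorem kern_pos (α : ℝ) {t : ℝ} (ht : t ∈ Ioo 0 (Real.exp 1)) : 0 < kern α t := by
  have := one_sub_log_pos ht
  have := ht.1
  rw [kern, log_exp_one_div ht.1]
  positivity

theorem kern_eq_rpow (α : ℝ) {t : ℝ} (ht : t ∈ Ioo 0 (Real.exp 1)) :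
    kern α t = (t * (1 - Real.log t)) ^ (-(1 / (α - 1))) := by
  rw [kern, log_exp_one_div ht.1, ← Real.mul_rpow ht.1.le (one_sub_log_pos ht).le,
    Real.rpow_neg (mul_pos ht.1 (one_sub_log_pos ht)).le, one_div]

theorem hasDerivAt_kern (α : ℝ) {s : ℝ} (hs : s ∈ Ioo 0 (Real.exp 1)) :
    HasDerivAt (kern α) (kern α s * (1 / (α - 1)) * Real.log s / (s * (1 - Real.log s))) s := by
  have hq := one_sub_log_pos hs
  have hprod : HasDerivAt (fun t => t * (1 - Real.log t)) (-Real.log s) s := by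
    refine ((hasDerivAt_id' s).mul ((Real.hasDerivAt_log hs.1.ne').const_sub 1)).congr_deriv ?_
    linear_combination -mul_inv_cancel₀ hs.1.ne'
  have hpow := hprod.rpow_const (p := -(1 / (α - 1))) (Or.inl (mul_pos hs.1 hq).ne')
  have hev : (fun t => (t * (1 - Real.log t)) ^ (-(1 / (α - 1)))) =ᶠ[nhds s] kern α := by
    filter_upwards [isOpen_Ioo.mem_nhds hs] with t ht
    rw [kern_eq_rpow α ht]
  refine (hpow.congr_of_eventuallyEq hev.symm).congr_deriv ?_
  rw [Real.rpow_sub_one (mul_pos hs.1 hq).ne', ← kern_eq_rpow α hs]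
  ring

theorem continuousOn_kern (α : ℝ) : ContinuousOn (kern α) (Ioo 0 (Real.exp 1)) :=
  fun _ hs => (hasDerivAt_kern α hs).continuousAt.continuousWithinAt

theorem kern_one (α : ℝ) : kern α 1 = 1 := by
  simp [kern]

def rhoBase (α s : ℝ) : ℝ :=
  1 + ((2 - α) / (α - 1)) * ∫ t in s..1, kern α t

theorem rho_eq_rhoBase_rpow (α s : ℝ) : rho α s = rhoBase α s ^ ((α - 1) / (α - 2)) := rfl

theorem hasDerivAt_rhoBase (α : ℝ) {s : ℝ} (hs : s ∈ Ioo 0 (Real.exp 1)) :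
    HasDerivAt (rhoBase α) (-((2 - α) / (α - 1) * kern α s)) s := by
  have hint : IntervalIntegrable (kern α) volume s 1 :=
    ((continuousOn_kern α).mono (uIcc_subset_Ioo_zero_exp_one hs)).intervalIntegrable
  have hmeas := (continuousOn_kern α).stronglyMeasurableAtFilter isOpen_Ioo s hs (μ := volume)
  have hderiv := intervalIntegral.integral_hasDerivAt_left hint hmeas
    (hasDerivAt_kern α hs).continuousAt
  exact ((hderiv.const_mul ((2 - α) / (α - 1))).const_add 1).congr_deriv (by ring)

theorem one_le_rhoBase {α s : ℝ} (hα₁ : 1 < α) (hα₂ : α ≤ 2) (hs : 0 < s) (hs1 : s ≤ 1) :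
    1 ≤ rhoBase α s := by
  have hc : 0 ≤ (2 - α) / (α - 1) := div_nonneg (by linarith) (by linarith)
  have hint : 0 ≤ ∫ t in s..1, kern α t := intervalIntegral.integral_nonneg hs1 fun t ht =>
    (kern_pos α (mem_Ioo_zero_exp_one (hs.trans_le ht.1) ht.2)).le
  unfold rhoBase
  nlinarith

theorem hasDerivAt_rho {α s : ℝ} (hα₁ : 1 < α) (hα₂ : α < 2) (hs : 0 < s) (hs1 : s ≤ 1) :
    HasDerivAt (rho α) (rhoBase α s ^ (1 / (α - 2)) * kern α s) s := by
  have hpos : 0 < rhoBase α s := one_pos.trans_le (one_le_rhoBase hα₁ hα₂.le hs hs1)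
  refine ((hasDerivAt_rhoBase α (mem_Ioo_zero_exp_one hs hs1)).rpow_const
    (Or.inl hpos.ne')).congr_deriv ?_
  have h1 : α - 1 ≠ 0 := by linarith
  have h2 : α - 2 ≠ 0 := by linarith
  rw [show (α - 1) / (α - 2) - 1 = 1 / (α - 2) by field_simp; ring]
  field_simp
  ring

theorem hasDerivAt_mul_kern_sub_rhoBase {α s : ℝ} (hα : α ≠ 1) (hs : s ∈ Ioo 0 (Real.exp 1)) :
    HasDerivAt (fun u => u * kern α u - rhoBase α u)
      (1 / (α - 1) * kern α s / (1 - Real.log s)) s := by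
  refine (((hasDerivAt_id' s).mul (hasDerivAt_kern α hs)).sub
    (hasDerivAt_rhoBase α hs)).congr_deriv ?_
  have h1 : α - 1 ≠ 0 := sub_ne_zero.mpr hα
  have h2 := (one_sub_log_pos hs).ne'
  have h3 := hs.1.ne'
  field_simp
  ring

theorem mul_kern_le_rhoBase {α s : ℝ} (hα : 1 < α) (hs : 0 < s) (hs1 : s ≤ 1) :
    s * kern α s ≤ rhoBase α s := by
  have hIcc : Icc s 1 ⊆ Ioo 0 (Real.exp 1) := fun t ht =>
    mem_Ioo_zero_exp_one (hs.trans_le ht.1) ht.2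
  have hderiv := fun t (ht : t ∈ Icc s 1) => hasDerivAt_mul_kern_sub_rhoBase hα.ne' (hIcc ht)
  have hmono : MonotoneOn (fun u => u * kern α u - rhoBase α u) (Icc s 1) := by
    refine monotoneOn_of_hasDerivWithinAt_nonneg (convex_Icc s 1)
      (fun t ht => (hderiv t ht).continuousAt.continuousWithinAt)
      (fun t ht => (hderiv t (interior_subset ht)).hasDerivWithinAt) fun t ht => ?_
    have := kern_pos α (hIcc (interior_subset ht))
    have := one_sub_log_pos (hIcc (interior_subset ht))
    have : 0 < α - 1 := by linarith
    positivity
  have h := hmono (left_mem_Icc.mpr hs1) (right_mem_Icc.mpr hs1) hs1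
  simp only [kern_one, rhoBase, intervalIntegral.integral_same] at h ⊢
  linarith

theorem rhoBase_rpow_mul_kern_le_rho_div {α s : ℝ} (hα₁ : 1 < α) (hα₂ : α < 2) (hs : 0 < s)
    (hs1 : s ≤ 1) :
    rhoBase α s ^ (1 / (α - 2)) * kern α s ≤ rho α s / s := by
  have hpos : 0 < rhoBase α s := one_pos.trans_le (one_le_rhoBase hα₁ hα₂.le hs hs1)
  have hsplit : rho α s = rhoBase α s ^ (1 / (α - 2)) * rhoBase α s := by
    rw [rho_eq_rhoBase_rpow, ← Real.rpow_add_one hpos.ne']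
    congr 1
    have : α - 2 ≠ 0 := by linarith
    field_simp
    ring
  rw [le_div_iff₀ hs, hsplit, mul_assoc, mul_comm (kern α s)]
  gcongr
  exact mul_kern_le_rhoBase hα₁ hs hs1

theorem fmap_min_deriv
    (α : ℝ) (hα₁ : 1 < α) (hα₂ : α < 2)
    (z : ℂ) (hz : z ∈ Metric.ball (0:ℂ) 1) (hz0 : z ≠ 0) :
    DifferentiableAt ℝ (fmap α) z ∧
      ‖wirtP (fmap α) z‖ - ‖wirtM (fmap α) z‖ =
        (1 + ((2 - α) / (α - 1)) * ∫ t in (‖z‖ : ℝ)..1, kern α t) ^ (1 / (α - 2)) *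
          (1 / (‖z‖ ^ (1 / (α - 1)) *
            (Real.log (Real.exp 1 / ‖z‖)) ^ (1 / (α - 1)))) := by
  have hr : 0 < ‖z‖ := norm_pos_iff.mpr hz0
  have hr1 : ‖z‖ ≤ 1 := (mem_ball_zero_iff.mp hz).le
  have hρ := hasDerivAt_rho hα₁ hα₂ hr hr1
  have hρ'_nonneg : 0 ≤ rhoBase α ‖z‖ ^ (1 / (α - 2)) * kern α ‖z‖ :=
    mul_nonneg (Real.rpow_nonneg (zero_le_one.trans (one_le_rhoBase hα₁ hα₂.le hr hr1)) _)
      (kern_pos α (mem_Ioo_zero_exp_one hr hr1)).le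
  have hρ'_le := rhoBase_rpow_mul_kern_le_rho_div hα₁ hα₂ hr hr1
  obtain ⟨L, hL, -⟩ := hasFDerivAt_radialMap hz0 hρ
  refine ⟨hL.differentiableAt, ?_⟩
  rw [show fmap α = radialMap (rho α) from rfl,
    norm_wirtP_sub_norm_wirtM_radialMap hz0 hρ (by linarith), min_eq_right hρ'_le]
  rfl
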